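/- arXiv:2509.12154 — 4 statements merged into one kernel-verified Lean document; each statement's English description precedes it below -/
import Mathlib

section
/- Let g: ℝ^k → ℝ be continuously differentiable with locally Lipschitz gradient, and suppose w* is a local minimum of g satisfying the Łojasiewicz inequality in a neighborhood of w*: there exist μ, γ > 0 and α ∈ (0,1) such that ‖∇g(w)‖ ≥ μ · (g(w) − g(w*))^α whenever ‖w − w*‖ ≤ γ. Then there exist μ₁ > 0 and γ₁ ∈ (0, γ) such that ‖∇g(w)‖ ≤ μ₁ · (g(w) − g(w*))^(1−α) whenever ‖w − w*‖ ≤ γ₁. -/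
/-!
Near a local minimum `x₀` around which `∇g` is `L`-Lipschitz, the gradient step
`x - (2L)⁻¹ ∇g(x)` cannot go below `g(x₀)`, while the descent lemma makes it decrease `g` by at
least `‖∇g(x)‖² / (4L)`; hence `‖∇g(x)‖² ≤ 4L (g(x) - g(x₀))`. Writing
`g(x) - g(x₀) = (g(x) - g(x₀))^(1-α) (g(x) - g(x₀))^α` and bounding the second factor by
`‖∇g(x)‖ / μ` with the Łojasiewicz inequality leaves `‖∇g(x)‖ ≤ (4L/μ) (g(x) - g(x₀))^(1-α)`.
-/

open Set Metric Filter Topology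
open scoped NNReal

section Descent

variable {E : Type*} [NormedAddCommGroup E] [InnerProductSpace ℝ E] [CompleteSpace E]
  {f : E → ℝ} {s : Set E} {K : ℝ≥0}

theorem Convex.image_sub_sub_inner_gradient_le_of_lipschitzOnWith (hs : Convex ℝ s)
    (hf : ∀ x ∈ s, DifferentiableAt ℝ f x) (hK : LipschitzOnWith K (gradient f) s)
    {x y : E} (hx : x ∈ s) (hy : y ∈ s) :
    f y - f x - inner ℝ (gradient f x) (y - x) ≤ K * ‖y - x‖ ^ 2 := by
  set s' := s ∩ closedBall x ‖y - x‖
  have bound : ∀ z ∈ s', ‖fderiv ℝ f z - fderiv ℝ f x‖ ≤ K * ‖y - x‖ := fun z hz => by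
    rw [← toDual_gradient, ← toDual_gradient, ← map_sub, LinearIsometryEquiv.norm_map]
    exact (hK.norm_sub_le hz.1 hx).trans (by gcongr; exact mem_closedBall_iff_norm.mp hz.2)
  have h := (hs.inter (convex_closedBall x _)).norm_image_sub_le_of_norm_fderiv_le'
    (fun z hz => hf z hz.1) bound ⟨hx, mem_closedBall_self (norm_nonneg _)⟩
    ⟨hy, mem_closedBall_iff_norm.mpr le_rfl⟩
  rw [← inner_gradient_left] at h
  exact (Real.le_norm_self _).trans (h.trans_eq (by ring))

theorem sq_norm_gradient_le_of_lipschitzOnWith (hK0 : 0 < K) (hs : Convex ℝ s)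
    (hf : ∀ x ∈ s, DifferentiableAt ℝ f x) (hK : LipschitzOnWith K (gradient f) s)
    {x : E} (hx : x ∈ s) (hstep : x - (2 * K : ℝ)⁻¹ • gradient f x ∈ s) :
    ‖gradient f x‖ ^ 2 ≤ 4 * K * (f x - f (x - (2 * K : ℝ)⁻¹ • gradient f x)) := by
  set t : ℝ := (2 * K : ℝ)⁻¹
  have hKt : (K : ℝ) * t = 1 / 2 := by
    have : (K : ℝ) ≠ 0 := by positivity
    simp only [t]
    field_simp
  have h := hs.image_sub_sub_inner_gradient_le_of_lipschitzOnWith hf hK hx hstep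
  rw [sub_sub_cancel_left, inner_neg_right, real_inner_smul_right, real_inner_self_eq_norm_sq,
    norm_neg, norm_smul, Real.norm_of_nonneg (by positivity)] at h
  linear_combination (4 * K : ℝ) * h + 4 * ‖gradient f x‖ ^ 2 * (K * t - 1 / 2) * hKt

theorem IsLocalMin.eventually_sq_norm_gradient_le {x₀ : E} (hmin : IsLocalMin f x₀)
    (hf : ∀ᶠ x in 𝓝 x₀, DifferentiableAt ℝ f x) {t : Set E} (ht : t ∈ 𝓝 x₀)
    (hK : LipschitzOnWith K (gradient f) t) :
    ∃ C > 0, ∀ᶠ x in 𝓝 x₀, ‖gradient f x‖ ^ 2 ≤ C * (f x - f x₀) := by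
  obtain ⟨ε, hε, hball⟩ := Metric.mem_nhds_iff.mp (inter_mem (inter_mem ht hf) hmin)
  -- `K + 1` rather than `K`: the step size `(2L)⁻¹` needs `L > 0`.
  set L := K + 1
  have hL0 : (0 : ℝ) < L := by positivity
  have hL : LipschitzOnWith L (gradient f) (ball x₀ ε) :=
    (hK.mono fun x hx => (hball hx).1.1).weaken (le_add_of_nonneg_right zero_le_one)
  have hgrad : gradient f x₀ = 0 := by simp [gradient, hmin.fderiv_eq_zero]
  refine ⟨4 * L, by positivity, ?_⟩
  filter_upwards [ball_mem_nhds x₀ (half_pos hε)] with x hx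
  have hx' : x ∈ ball x₀ ε := ball_subset_ball (half_le_self hε.le) hx
  have hstep : x - (2 * L : ℝ)⁻¹ • gradient f x ∈ ball x₀ ε := by
    have hnorm : ‖gradient f x‖ ≤ L * dist x x₀ := by
      simpa [hgrad, dist_eq_norm] using hL.norm_sub_le hx' (mem_ball_self hε)
    rw [mem_ball] at hx ⊢
    calc dist (x - (2 * L : ℝ)⁻¹ • gradient f x) x₀
        ≤ dist x x₀ + (2 * L : ℝ)⁻¹ * ‖gradient f x‖ := by
          rw [dist_eq_norm, dist_eq_norm, sub_right_comm]
          exact (norm_sub_le _ _).trans_eq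
            (by rw [norm_smul, Real.norm_of_nonneg (by positivity)])
      _ ≤ dist x x₀ + (2 * L : ℝ)⁻¹ * (L * dist x x₀) := by gcongr
      _ = 3 / 2 * dist x x₀ := by field_simp; ring
      _ < ε := by linarith
  refine (sq_norm_gradient_le_of_lipschitzOnWith (by positivity) (convex_ball _ _)
    (fun y hy => (hball hy).1.2) hL hx' hstep).trans ?_
  gcongr
  exact (hball hstep).2

end Descent

theorem le_div_mul_rpow_one_sub_of_sq_le_mul {N Δ C μ α : ℝ} (hC : 0 < C) (hμ : 0 < μ)
    (hN : 0 ≤ N) (hsq : N ^ 2 ≤ C * Δ) (hloj : μ * Δ ^ α ≤ N) :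
    N ≤ C / μ * Δ ^ (1 - α) := by
  have hΔ : 0 ≤ Δ := nonneg_of_mul_nonneg_right ((sq_nonneg N).trans hsq) hC
  rcases hN.eq_or_lt with rfl | hN
  · positivity
  refine le_of_mul_le_mul_right ?_ hN
  calc N * N = N ^ 2 := (sq N).symm
    _ ≤ C * Δ := hsq
    _ = C / μ * Δ ^ (1 - α) * (μ * Δ ^ α) := by
      rw [mul_mul_mul_comm, ← Real.rpow_add' hΔ (by norm_num), sub_add_cancel, Real.rpow_one,
        div_mul_cancel₀ _ hμ.ne']
    _ ≤ C / μ * Δ ^ (1 - α) * N := by gcongr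

theorem reverse_lojasiewicz_general {k : ℕ}
    (g : EuclideanSpace ℝ (Fin k) → ℝ)
    (hg : ContDiff ℝ 1 g)
    (hlip : LocallyLipschitz (gradient g))
    (wstar : EuclideanSpace ℝ (Fin k))
    (hmin : IsLocalMin g wstar)
    (μ γ α : ℝ) (hμ : 0 < μ) (hγ : 0 < γ)
    (hloj : ∀ w : EuclideanSpace ℝ (Fin k), ‖w - wstar‖ ≤ γ →
      μ * (g w - g wstar) ^ α ≤ ‖gradient g w‖) :
    ∃ μ₁ : ℝ, 0 < μ₁ ∧ ∃ γ₁ ∈ Set.Ioo (0:ℝ) γ,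
      ∀ w : EuclideanSpace ℝ (Fin k), ‖w - wstar‖ ≤ γ₁ →
        ‖gradient g w‖ ≤ μ₁ * (g w - g wstar) ^ (1 - α) := by
  obtain ⟨K, t, ht, hK⟩ := hlip wstar
  obtain ⟨C, hC, hsq⟩ := hmin.eventually_sq_norm_gradient_le
    (Eventually.of_forall (hg.differentiable one_ne_zero)) ht hK
  obtain ⟨r, hr, hsq⟩ := nhds_basis_closedBall.eventually_iff.mp hsq
  refine ⟨C / μ, by positivity, min r (γ / 2),
    ⟨by positivity, (min_le_right _ _).trans_lt (half_lt_self hγ)⟩, fun w hw => ?_⟩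
  have hwr : w ∈ closedBall wstar r := mem_closedBall_iff_norm.mpr (hw.trans (min_le_left _ _))
  have hwγ : ‖w - wstar‖ ≤ γ := hw.trans ((min_le_right _ _).trans (half_le_self hγ.le))
  exact le_div_mul_rpow_one_sub_of_sq_le_mul hC hμ (norm_nonneg _) (hsq hwr) (hloj w hwγ)

/-- Reverse Łojasiewicz inequality: if `g` is `C¹` with locally Lipschitz gradient and
`w*` is a local minimum of `g` satisfying the Łojasiewicz inequality with exponent
`α ∈ (0,1)` on a ball of radius `γ`, then there exist `μ₁ > 0` and `γ₁ ∈ (0, γ)` such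
that `‖∇g(w)‖ ≤ μ₁ (g(w) - g(w*))^(1-α)` on the ball of radius `γ₁`. -/
theorem reverse_lojasiewicz {k : ℕ}
    (g : EuclideanSpace ℝ (Fin k) → ℝ)
    (hg : ContDiff ℝ 1 g)
    (hlip : LocallyLipschitz (gradient g))
    (wstar : EuclideanSpace ℝ (Fin k))
    (hmin : IsLocalMin g wstar)
    (μ γ α : ℝ) (hμ : 0 < μ) (hγ : 0 < γ) (hα : α ∈ Set.Ioo (0:ℝ) 1)
    (hloj : ∀ w : EuclideanSpace ℝ (Fin k), ‖w - wstar‖ ≤ γ →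
      μ * (g w - g wstar) ^ α ≤ ‖gradient g w‖) :
    ∃ μ₁ : ℝ, 0 < μ₁ ∧ ∃ γ₁ ∈ Set.Ioo (0:ℝ) γ,
      ∀ w : EuclideanSpace ℝ (Fin k), ‖w - wstar‖ ≤ γ₁ →
        ‖gradient g w‖ ≤ μ₁ * (g w - g wstar) ^ (1 - α) :=
  reverse_lojasiewicz_general g hg hlip wstar hmin μ γ α hμ hγ hloj
end

section
/- Let g: ℝ^d → ℝ be continuously differentiable and L-positively homogeneous with L > 2, and let w(t) solve the gradient flow ẇ = ∇g(w) with ‖w(0)‖ = 1 and g(w(0)) > 0. Suppose g(w(t)/‖w(t)‖) is nondecreasing in t and ‖w(t)‖ is nondecreasing, and that the solution blows up at time T (i.e., lim_{t→T} ‖w(t)‖ = ∞) with lim_{t→T} g(w(t)/‖w(t)‖) = g* ∈ (0, ∞). Then the blowup time satisfies 1/(L(L−2)·g*) ≤ T ≤ 1/(L(L−2)·g(w(0))). -/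
/-!
Write `u(t) = ‖w(t)‖^(2-L)`. Euler's identity `⟪∇g(x), x⟫ = L g(x)` turns the gradient flow into
`u' = -L(L-2) g(w/‖w‖)`, so `u` decreases from `u(0) = 1` to `0` at the blowup time with slope
trapped between `-L(L-2) g*` and `-L(L-2) g(w(0))` by the monotonicity of `g(w/‖w‖)`.
Integrating these slope bounds over `[0, T)` gives both inequalities.
-/

open Filter Topology Set
open scoped InnerProductSpace

def PosHomogeneous {E : Type*} [SMul ℝ E] (L : ℝ) (g : E → ℝ) : Prop :=
  ∀ c : ℝ, 0 ≤ c → ∀ x : E, g (c • x) = c ^ L * g x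

namespace PosHomogeneous

variable {E : Type*} {L : ℝ} {g : E → ℝ}

theorem map_zero [Zero E] [SMulZeroClass ℝ E] (hg : PosHomogeneous L g) (hL : L ≠ 0) :
    g 0 = 0 := by
  simpa [Real.zero_rpow hL] using hg 0 le_rfl 0

theorem eq_norm_rpow_mul [NormedAddCommGroup E] [NormedSpace ℝ E] (hg : PosHomogeneous L g)
    (x : E) : g x = ‖x‖ ^ L * g (‖x‖⁻¹ • x) := by
  rw [← hg _ (norm_nonneg x)]
  rcases eq_or_ne x 0 with rfl | hx
  · simp
  · rw [smul_inv_smul₀ (norm_ne_zero_iff.mpr hx)]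

theorem fderiv_apply_self [NormedAddCommGroup E] [NormedSpace ℝ E] (hg : PosHomogeneous L g)
    {x : E} (hdiff : DifferentiableAt ℝ g x) : fderiv ℝ g x x = L * g x := by
  have hscale : HasDerivAt (fun c : ℝ => g (c • x)) (fderiv ℝ g x x) 1 := by
    have hdiff' : HasFDerivAt g (fderiv ℝ g x) ((1 : ℝ) • x) := by
      simpa using hdiff.hasFDerivAt
    have := hdiff'.comp_hasDerivAt (1 : ℝ) ((hasDerivAt_id (1 : ℝ)).smul_const x)
    rwa [one_smul] at this
  have hpow : HasDerivAt (fun c : ℝ => c ^ L * g x) (L * g x) 1 := by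
    simpa using ((Real.hasDerivAt_rpow_const (p := L) (Or.inl one_ne_zero)).mul_const (g x))
  have heq : (fun c : ℝ => c ^ L * g x) =ᶠ[𝓝 1] fun c => g (c • x) := by
    filter_upwards [Ioi_mem_nhds one_pos] with c hc
    exact (hg c hc.le x).symm
  exact hscale.unique (hpow.congr_of_eventuallyEq heq.symm)

theorem inner_gradient_self [NormedAddCommGroup E] [InnerProductSpace ℝ E] [CompleteSpace E]
    (hg : PosHomogeneous L g) {x : E} (hdiff : DifferentiableAt ℝ g x) :
    ⟪gradient g x, x⟫_ℝ = L * g x := by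
  rw [inner_gradient_left, hg.fderiv_apply_self hdiff]

end PosHomogeneous

theorem HasDerivAt.norm_rpow {F : Type*} [NormedAddCommGroup F] [InnerProductSpace ℝ F]
    {f : ℝ → F} {f' : F} {t : ℝ} (hf : HasDerivAt f f' t)
    (h0 : f t ≠ 0) (p : ℝ) :
    HasDerivAt (fun s => ‖f s‖ ^ p) (p * ‖f t‖ ^ (p - 2) * ⟪f t, f'⟫_ℝ) t := by
  have hpos : 0 < ‖f t‖ ^ 2 := by positivity
  have hsq := hf.norm_sq.rpow_const (p := p / 2) (Or.inl hpos.ne')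
  have hpow : ∀ s, (‖f s‖ ^ 2) ^ (p / 2) = ‖f s‖ ^ p := fun s => by
    rw [← Real.rpow_natCast, ← Real.rpow_mul (norm_nonneg _)]; ring_nf
  have hpow' : (‖f t‖ ^ 2) ^ (p / 2 - 1) = ‖f t‖ ^ (p - 2) := by
    rw [← Real.rpow_natCast, ← Real.rpow_mul (norm_nonneg _)]; ring_nf
  simp only [hpow, hpow'] at hsq
  convert hsq using 1
  ring

theorem hasDerivAt_norm_rpow_two_sub_of_gradient_flow {E : Type*} [NormedAddCommGroup E]
    [InnerProductSpace ℝ E] [CompleteSpace E] {L : ℝ} {g : E → ℝ}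
    (hg : PosHomogeneous L g) {w : ℝ → E} {t : ℝ} (hdiff : DifferentiableAt ℝ g (w t))
    (hflow : HasDerivAt w (gradient g (w t)) t) (hw : w t ≠ 0) :
    HasDerivAt (fun s => ‖w s‖ ^ (2 - L))
      (-(L * (L - 2) * g (‖w t‖⁻¹ • w t))) t := by
  convert hflow.norm_rpow hw (2 - L) using 1
  have hnorm : 0 < ‖w t‖ := norm_pos_iff.mpr hw
  have hcancel : ‖w t‖ ^ (2 - L - 2) * ‖w t‖ ^ L = 1 := by
    rw [← Real.rpow_add hnorm]; simp
  rw [real_inner_comm, hg.inner_gradient_self hdiff, hg.eq_norm_rpow_mul (w t)]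
  linear_combination (L * (L - 2) * g (‖w t‖⁻¹ • w t)) * hcancel

theorem MonotoneOn.le_of_tendsto_nhdsLT {β : Type*} [Preorder β] [TopologicalSpace β]
    [ClosedIciTopology β] {f : ℝ → β} {a b : ℝ} {l : β} (hf : MonotoneOn f (Ico a b))
    (hlim : Tendsto f (𝓝[<] b) (𝓝 l)) {t : ℝ} (ht : t ∈ Ico a b) : f t ≤ l := by
  refine ge_of_tendsto hlim ?_
  filter_upwards [Ioo_mem_nhdsLT ht.2] with s hs
  exact hf ht ⟨ht.1.trans hs.1.le, hs.2⟩ hs.1.le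

theorem mul_sub_le_sub_of_le_hasDerivAt_of_tendsto_nhdsLT {u u' : ℝ → ℝ} {a b c l : ℝ}
    (hab : a < b) (hu : ∀ t ∈ Ico a b, HasDerivAt u (u' t) t) (hc : ∀ t ∈ Ico a b, c ≤ u' t)
    (hlim : Tendsto u (𝓝[<] b) (𝓝 l)) : c * (b - a) ≤ l - u a := by
  have hmono : MonotoneOn (fun t => u t - c * t) (Ico a b) := by
    have hderiv : ∀ t ∈ Ico a b, HasDerivAt (fun t => u t - c * t) (u' t - c) t := fun t ht => by
      have := (hu t ht).sub ((hasDerivAt_id t).const_mul c)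
      rwa [mul_one] at this
    refine monotoneOn_of_hasDerivWithinAt_nonneg (f' := fun t => u' t - c) (convex_Ico a b)
      (fun t ht => (hderiv t ht).continuousAt.continuousWithinAt) (fun t ht => ?_)
      (fun t ht => ?_)
    all_goals rw [interior_Ico] at ht
    · exact (hderiv t (Ioo_subset_Ico_self ht)).hasDerivWithinAt
    · exact sub_nonneg.mpr (hc t (Ioo_subset_Ico_self ht))
  have hlim' : Tendsto (fun t => u t - c * t) (𝓝[<] b) (𝓝 (l - c * b)) :=
    hlim.sub ((continuous_const.mul continuous_id).tendsto b |>.mono_left nhdsWithin_le_nhds)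
  have := hmono.le_of_tendsto_nhdsLT hlim' ⟨le_rfl, hab⟩
  linarith

theorem sub_le_mul_sub_of_hasDerivAt_le_of_tendsto_nhdsLT {u u' : ℝ → ℝ} {a b c l : ℝ}
    (hab : a < b) (hu : ∀ t ∈ Ico a b, HasDerivAt u (u' t) t) (hc : ∀ t ∈ Ico a b, u' t ≤ c)
    (hlim : Tendsto u (𝓝[<] b) (𝓝 l)) : l - u a ≤ c * (b - a) := by
  have := mul_sub_le_sub_of_le_hasDerivAt_of_tendsto_nhdsLT (u := -u) (c := -c) hab
    (fun t ht => (hu t ht).neg) (fun t ht => neg_le_neg (hc t ht)) hlim.neg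
  simp only [Pi.neg_apply] at this
  linarith

theorem blowup_time_bounds_general {d : ℕ} (L : ℝ) (hL : 2 < L)
    (g : EuclideanSpace ℝ (Fin d) → ℝ) (hg : ContDiff ℝ 1 g)
    (hhom : ∀ c : ℝ, 0 ≤ c → ∀ x : EuclideanSpace ℝ (Fin d),
      g (c • x) = c ^ L * g x)
    (T : ℝ) (hT : 0 < T)
    (w : ℝ → EuclideanSpace ℝ (Fin d))
    (hflow : ∀ t ∈ Set.Ico (0:ℝ) T, HasDerivAt w (gradient g (w t)) t)
    (hnorm0 : ‖w 0‖ = 1) (hg0 : 0 < g (w 0))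
    (hmono1 : MonotoneOn (fun t => g ((‖w t‖)⁻¹ • w t)) (Set.Ico (0:ℝ) T))
    (hblow : Tendsto (fun t => ‖w t‖) (nhdsWithin T (Set.Iio T)) atTop)
    (gstar : ℝ)
    (hglim : Tendsto (fun t => g ((‖w t‖)⁻¹ • w t))
      (nhdsWithin T (Set.Iio T)) (nhds gstar)) :
    1 / (L * (L - 2) * gstar) ≤ T ∧ T ≤ 1 / (L * (L - 2) * g (w 0)) := by
  have hA : 0 < L * (L - 2) := by nlinarith
  have h0 : (0 : ℝ) ∈ Ico 0 T := ⟨le_rfl, hT⟩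
  have hlower : ∀ t ∈ Ico 0 T, g (w 0) ≤ g (‖w t‖⁻¹ • w t) := fun t ht => by
    simpa [hnorm0] using hmono1 h0 ht ht.1
  have hupper : ∀ t ∈ Ico 0 T, g (‖w t‖⁻¹ • w t) ≤ gstar := fun t ht =>
    hmono1.le_of_tendsto_nhdsLT hglim ht
  have hw : ∀ t ∈ Ico 0 T, w t ≠ 0 := fun t ht hwt => by
    have := hlower t ht
    rw [hwt, smul_zero, PosHomogeneous.map_zero hhom (by linarith)] at this
    linarith
  have hderiv : ∀ t ∈ Ico 0 T, HasDerivAt (fun s => ‖w s‖ ^ (2 - L))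
      (-(L * (L - 2) * g (‖w t‖⁻¹ • w t))) t := fun t ht =>
    hasDerivAt_norm_rpow_two_sub_of_gradient_flow hhom (hg.differentiable one_ne_zero _)
      (hflow t ht) (hw t ht)
  have hlim : Tendsto (fun s => ‖w s‖ ^ (2 - L)) (𝓝[<] T) (𝓝 0) := by
    have := (tendsto_rpow_neg_atTop (by linarith : 0 < L - 2)).comp hblow
    rwa [neg_sub] at this
  have hlb := mul_sub_le_sub_of_le_hasDerivAt_of_tendsto_nhdsLT hT hderiv
    (fun t ht => neg_le_neg (mul_le_mul_of_nonneg_left (hupper t ht) hA.le)) hlim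
  have hub := sub_le_mul_sub_of_hasDerivAt_le_of_tendsto_nhdsLT hT hderiv
    (fun t ht => neg_le_neg (mul_le_mul_of_nonneg_left (hlower t ht) hA.le)) hlim
  have hgstar : 0 < gstar := hg0.trans_le ((hlower 0 h0).trans (hupper 0 h0))
  simp only [hnorm0, Real.one_rpow] at hlb hub
  constructor
  · rw [div_le_iff₀ (by positivity)]; linarith
  · rw [le_div_iff₀ (by positivity)]; linarith

/-- Blowup-time bounds for gradient flow of an `L`-homogeneous function with `L > 2`:
if `‖w(0)‖ = 1`, `g(w(0)) > 0`, the normalized value `g(w/‖w‖)` and the norm `‖w‖`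
are nondecreasing, the solution blows up at time `T`, and `g(w/‖w‖) → g* > 0`,
then `1/(L(L-2) g*) ≤ T ≤ 1/(L(L-2) g(w(0)))`. -/
theorem blowup_time_bounds {d : ℕ} (L : ℝ) (hL : 2 < L)
    (g : EuclideanSpace ℝ (Fin d) → ℝ) (hg : ContDiff ℝ 1 g)
    (hhom : ∀ c : ℝ, 0 ≤ c → ∀ x : EuclideanSpace ℝ (Fin d),
      g (c • x) = c ^ L * g x)
    (T : ℝ) (hT : 0 < T)
    (w : ℝ → EuclideanSpace ℝ (Fin d))
    (hflow : ∀ t ∈ Set.Ico (0:ℝ) T, HasDerivAt w (gradient g (w t)) t)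
    (hnorm0 : ‖w 0‖ = 1) (hg0 : 0 < g (w 0))
    (hmono1 : MonotoneOn (fun t => g ((‖w t‖)⁻¹ • w t)) (Set.Ico (0:ℝ) T))
    (hmono2 : MonotoneOn (fun t => ‖w t‖) (Set.Ico (0:ℝ) T))
    (hblow : Tendsto (fun t => ‖w t‖) (nhdsWithin T (Set.Iio T)) atTop)
    (gstar : ℝ) (hgstar : 0 < gstar)
    (hglim : Tendsto (fun t => g ((‖w t‖)⁻¹ • w t))
      (nhdsWithin T (Set.Iio T)) (nhds gstar)) :
    1 / (L * (L - 2) * gstar) ≤ T ∧ T ≤ 1 / (L * (L - 2) * g (w 0)) :=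
  blowup_time_bounds_general L hL g hg hhom T hT w hflow hnorm0 hg0 hmono1 hblow gstar hglim
end

section
/- Along the gradient flow ẇ = ∇g(w) of a differentiable function g: ℝ^d → ℝ, the quantity g(w(t)/‖w(t)‖^L) is nondecreasing when g is L-homogeneous. More precisely, if g is L-positively homogeneous and differentiable, and w(t) solves ẇ = ∇g(w) with w(t) ≠ 0, then d/dt [ g(w(t)) / ‖w(t)‖^L ] = ⟨∇g(w), (I − wwᵀ/‖w‖²) ∇g(w)⟩ / ‖w‖^L ≥ 0. -/
/-!
Euler's identity `⟪w, ∇g w⟫ = L g(w)` turns the quotient rule for `g(w) / ‖w‖^L` along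
`ẇ = ∇g(w)` into `(‖∇g‖² - ⟪w, ∇g⟫² / ‖w‖²) / ‖w‖^L`, which is nonnegative by Cauchy–Schwarz.
-/

open RealInnerProductSpace

theorem HasFDerivAt.apply_self_eq_mul_of_homogeneous {F : Type*} [NormedAddCommGroup F]
    [NormedSpace ℝ F] {g : F → ℝ} {g' : F →L[ℝ] ℝ} {x : F} {L : ℝ} (hg : HasFDerivAt g g' x)
    (hhom : ∀ c : ℝ, 0 < c → g (c • x) = c ^ L * g x) :
    g' x = L * g x := by
  have hline : HasDerivAt (fun c : ℝ => c • x) x 1 := by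
    simpa using (hasDerivAt_id (1 : ℝ)).smul_const x
  have hray : HasDerivAt (fun c : ℝ => g (c • x)) (g' x) 1 :=
    hg.comp_hasDerivAt_of_eq 1 hline (one_smul ℝ x).symm
  have hpow : HasDerivAt (fun c : ℝ => c ^ L * g x) (L * g x) 1 := by
    simpa using (Real.hasDerivAt_rpow_const (x := 1) (p := L) (Or.inl one_ne_zero)).mul_const (g x)
  exact hray.unique <| hpow.congr_of_eventuallyEq <|
    (eventually_gt_nhds one_pos).mono fun c hc => hhom c hc

theorem Real.sq_rpow_div_two {x : ℝ} (hx : 0 ≤ x) (p : ℝ) : (x ^ 2) ^ (p / 2) = x ^ p := by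
  rw [← Real.rpow_natCast_mul hx]
  norm_num [mul_div_cancel₀]

section InnerProductSpace

variable {E : Type*} [NormedAddCommGroup E] [InnerProductSpace ℝ E]

theorem real_inner_self_gradient_eq_mul_of_homogeneous [CompleteSpace E] {g : E → ℝ} {x : E}
    {L : ℝ} (hg : DifferentiableAt ℝ g x) (hhom : ∀ c : ℝ, 0 < c → g (c • x) = c ^ L * g x) :
    ⟪x, gradient g x⟫ = L * g x := by
  rw [real_inner_comm, ← InnerProductSpace.toDual_apply_apply]
  exact hg.hasGradientAt.hasFDerivAt.apply_self_eq_mul_of_homogeneous hhom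

theorem HasDerivAt.norm_rpow_s9 {w : ℝ → E} {w' : E} {t : ℝ} (p : ℝ) (hw : HasDerivAt w w' t)
    (hne : w t ≠ 0) :
    HasDerivAt (fun s => ‖w s‖ ^ p) (p * ‖w t‖ ^ (p - 2) * ⟪w t, w'⟫) t := by
  have hsq := hw.norm_sq.rpow_const (p := p / 2) (Or.inl (by positivity))
  simp only [Real.sq_rpow_div_two (norm_nonneg _)] at hsq
  convert hsq using 1
  rw [show p / 2 - 1 = (p - 2) / 2 by ring, Real.sq_rpow_div_two (norm_nonneg _)]
  ring

theorem real_inner_self_sub_smul_eq (v x : E) :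
    ⟪v, v - (⟪x, v⟫ / ‖x‖ ^ 2) • x⟫ = ⟪v, v⟫ - ⟪x, v⟫ ^ 2 / ‖x‖ ^ 2 := by
  rw [inner_sub_right, real_inner_smul_right, real_inner_comm v x]
  ring

theorem real_inner_self_sub_smul_nonneg (v x : E) :
    0 ≤ ⟪v, v - (⟪x, v⟫ / ‖x‖ ^ 2) • x⟫ := by
  rw [real_inner_self_sub_smul_eq, sub_nonneg]
  rcases eq_or_ne x 0 with rfl | hx
  · simp
  rw [div_le_iff₀ (by positivity), sq, ← real_inner_self_eq_norm_sq, mul_comm ⟪v, v⟫]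
  exact real_inner_mul_inner_self_le x v

end InnerProductSpace

theorem normalized_value_nondecreasing_general {d : ℕ} (L : ℝ)
    (g : EuclideanSpace ℝ (Fin d) → ℝ) (hg : Differentiable ℝ g)
    (hhom : ∀ c : ℝ, 0 ≤ c → ∀ x : EuclideanSpace ℝ (Fin d),
      g (c • x) = c ^ L * g x)
    (w : ℝ → EuclideanSpace ℝ (Fin d))
    (hflow : ∀ s : ℝ, HasDerivAt w (gradient g (w s)) s)
    (hne : ∀ s : ℝ, w s ≠ 0) (t : ℝ) :
    HasDerivAt (fun s => g (w s) / ‖w s‖ ^ L)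
      ((inner ℝ (gradient g (w t))
          (gradient g (w t)
            - (((inner ℝ (w t) (gradient g (w t)) : ℝ) / ‖w t‖ ^ 2) • w t)) : ℝ)
        / ‖w t‖ ^ L) t ∧
    0 ≤ ((inner ℝ (gradient g (w t))
          (gradient g (w t)
            - (((inner ℝ (w t) (gradient g (w t)) : ℝ) / ‖w t‖ ^ 2) • w t)) : ℝ)
        / ‖w t‖ ^ L) := by
  set x := w t with hx_def
  set v := gradient g x
  have hx : 0 < ‖x‖ := norm_pos_iff.2 (hne t)
  have heuler : ⟪x, v⟫ = L * g x :=
    real_inner_self_gradient_eq_mul_of_homogeneous (hg x) fun c hc => hhom c hc.le x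
  have hnum : HasDerivAt (fun s => g (w s)) ⟪v, v⟫ t :=
    (hg x).hasGradientAt.hasFDerivAt.comp_hasDerivAt t (hflow t)
  have hden : HasDerivAt (fun s => ‖w s‖ ^ L) (L * ‖x‖ ^ (L - 2) * ⟪x, v⟫) t :=
    (hflow t).norm_rpow_s9 L (hne t)
  refine ⟨?_, div_nonneg (real_inner_self_sub_smul_nonneg v x) (by positivity)⟩
  refine (hnum.div hden (by positivity)).congr_deriv ?_
  rw [← hx_def, real_inner_self_sub_smul_eq, Real.rpow_sub hx, Real.rpow_two]
  field_simp
  linear_combination ⟪x, v⟫ * heuler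

/-- Along the gradient flow `ẇ = ∇g(w)` of a differentiable `L`-homogeneous `g`,
the normalized value `g(w)/‖w‖^L` is nondecreasing: its derivative equals
`⟨∇g(w), (I - wwᵀ/‖w‖²)∇g(w)⟩ / ‖w‖^L`, which is nonnegative. -/
theorem normalized_value_nondecreasing {d : ℕ} (L : ℝ) (hL : 0 < L)
    (g : EuclideanSpace ℝ (Fin d) → ℝ) (hg : Differentiable ℝ g)
    (hhom : ∀ c : ℝ, 0 ≤ c → ∀ x : EuclideanSpace ℝ (Fin d),
      g (c • x) = c ^ L * g x)
    (w : ℝ → EuclideanSpace ℝ (Fin d))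
    (hflow : ∀ s : ℝ, HasDerivAt w (gradient g (w s)) s)
    (hne : ∀ s : ℝ, w s ≠ 0) (t : ℝ) :
    HasDerivAt (fun s => g (w s) / ‖w s‖ ^ L)
      ((inner ℝ (gradient g (w t))
          (gradient g (w t)
            - (((inner ℝ (w t) (gradient g (w t)) : ℝ) / ‖w t‖ ^ 2) • w t)) : ℝ)
        / ‖w t‖ ^ L) t ∧
    0 ≤ ((inner ℝ (gradient g (w t))
          (gradient g (w t)
            - (((inner ℝ (w t) (gradient g (w t)) : ℝ) / ‖w t‖ ^ 2) • w t)) : ℝ)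
        / ‖w t‖ ^ L) :=
  normalized_value_nondecreasing_general L g hg hhom w hflow hne t
end

section
/- Let σ(x) = max(0, x)². Consider a three-layer network on ℝ^d with H(x; W₁, W₂, W₃) = W₃σ(W₂σ(W₁x)), two training points x₁ = (1/d)·𝟙, y₁ = 1 and x₂ = −(1/d)·𝟙, y₂ = 1 (𝟙 the all-ones vector), and loss L = ½(H(x₁)−y₁)² + ½(H(x₂)−y₂)². Let W̄₁ ∈ ℝ^{d×d} have first row 𝟙ᵀ and other rows zero, W̄₂ ∈ ℝ^{d×d} have (1,1)-entry equal to 1 and other entries zero, and W̄₃ ∈ ℝ^{1×d} = (1, 0, …, 0). Then the residuals satisfy y₁ − H(x₁; W̄₁,W̄₂,W̄₃) = 0 and y₂ − H(x₂; W̄₁,W̄₂,W̄₃) = 1, and (W̄₁, W̄₂, W̄₃) is a stationary point of L (all gradients vanish). -/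
/-!
At `x₂ = -𝟙/d` every first-layer neuron of `(W̄₁, W̄₂, W̄₃)` has nonpositive pre-activation.
Since `σ t ≤ (t - s)²` whenever `s ≤ 0`, the squared ReLU of a differentiable function that is
nonpositive at a point vanishes to second order there; pushing this through the three layers,
the output at `x₂` has value `0` and zero derivative in the weights. At `x₁` the network fits
`y₁` exactly, so the gradient of the first loss term carries the factor `H(x₁) - y₁ = 0`.
-/

open Filter Topology Asymptotics

def sqRelu (x : ℝ) : ℝ := max 0 x ^ 2

lemma sqRelu_of_nonpos {x : ℝ} (hx : x ≤ 0) : sqRelu x = 0 := by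
  simp [sqRelu, hx]

lemma sqRelu_one : sqRelu 1 = 1 := by
  norm_num [sqRelu]

lemma sqRelu_le_sq_sub {x y : ℝ} (hy : y ≤ 0) : sqRelu x ≤ (x - y) ^ 2 := by
  have : max 0 x ≤ |x - y| := max_le (abs_nonneg _) (by linarith [le_abs_self (x - y)])
  simpa [sqRelu, sq_abs] using pow_le_pow_left₀ (le_max_left 0 x) this 2

section Calculus

variable {E : Type*} [NormedAddCommGroup E] [NormedSpace ℝ E] {p : E}

lemma DifferentiableAt.hasFDerivAt_sqRelu_comp_of_nonpos {g : E → ℝ}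
    (hg : DifferentiableAt ℝ g p) (hp : g p ≤ 0) :
    HasFDerivAt (fun W => sqRelu (g W)) (0 : E →L[ℝ] ℝ) p := by
  refine IsBigO.hasFDerivAt (n := 2) ?_ one_lt_two
  have hsq : (fun W => sqRelu (g W)) =O[𝓝 p] fun W => (g W - g p) ^ 2 :=
    IsBigO.of_bound' <| Eventually.of_forall fun W => by
      have h0 : 0 ≤ sqRelu (g W) := sq_nonneg _
      simpa [Real.norm_eq_abs, abs_of_nonneg h0] using sqRelu_le_sq_sub (x := g W) hp
  exact hsq.trans (hg.isBigO_sub.norm_right.pow 2)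

@[fun_prop]
lemma differentiable_sqRelu : Differentiable ℝ sqRelu := fun x => by
  rcases le_or_gt x 0 with hx | hx
  · exact (differentiableAt_id.hasFDerivAt_sqRelu_comp_of_nonpos hx).differentiableAt
  · have : (fun y : ℝ => y ^ 2) =ᶠ[𝓝 x] sqRelu :=
      (lt_mem_nhds hx).mono fun y hy => by simp [sqRelu, hy.le]
    exact (differentiableAt_pow 2).congr_of_eventuallyEq this.symm

lemma hasFDerivAt_sum_mul_of_hasFDerivAt_zero {ι : Type*} [Fintype ι] {c f : ι → E → ℝ}
    (hc : ∀ i, DifferentiableAt ℝ (c i) p) (hf : ∀ i, HasFDerivAt (f i) (0 : E →L[ℝ] ℝ) p)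
    (hf₀ : ∀ i, f i p = 0) :
    HasFDerivAt (fun W => ∑ i, c i W * f i W) (0 : E →L[ℝ] ℝ) p := by
  simpa [hf₀] using HasFDerivAt.fun_sum fun i _ => (hc i).hasFDerivAt.fun_mul (hf i)

lemma HasFDerivAt.half_sq_sub {g : E → ℝ} {g' : E →L[ℝ] ℝ} (hg : HasFDerivAt g g' p) (c : ℝ) :
    HasFDerivAt (fun W => 1 / 2 * (g W - c) ^ 2) ((g p - c) • g') p := by
  have hout : HasDerivAt (fun s : ℝ => 1 / 2 * (s - c) ^ 2) (g p - c) (g p) :=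
    ((((hasDerivAt_id (g p)).sub_const c).pow 2).const_mul (1 / 2 : ℝ)).congr_deriv (by
      simp only [id_eq]; ring)
  exact hout.comp_hasFDerivAt p hg

end Calculus

section Network

variable {ι κ μ : Type*} [Fintype ι] [Fintype κ] [Fintype μ]

def sqReluNet (W : (κ → ι → ℝ) × (μ → κ → ℝ) × (μ → ℝ)) (x : ι → ℝ) : ℝ :=
  ∑ j, W.2.2 j * sqRelu (∑ k, W.2.1 j k * sqRelu (∑ l, W.1 k l * x l))

@[fun_prop]
lemma differentiable_sqReluNet (x : ι → ℝ) :
    Differentiable ℝ fun W : (κ → ι → ℝ) × (μ → κ → ℝ) × (μ → ℝ) => sqReluNet W x := by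
  unfold sqReluNet
  fun_prop

variable {W : (κ → ι → ℝ) × (μ → κ → ℝ) × (μ → ℝ)} {x : ι → ℝ}

lemma sqReluNet_eq_zero_of_nonpos (h : ∀ k, ∑ l, W.1 k l * x l ≤ 0) : sqReluNet W x = 0 := by
  simp [sqReluNet, sqRelu_of_nonpos (h _), sqRelu_of_nonpos le_rfl]

lemma hasFDerivAt_sqReluNet_zero_of_nonpos (h : ∀ k, ∑ l, W.1 k l * x l ≤ 0) :
    HasFDerivAt (fun V => sqReluNet V x) (0 : _ →L[ℝ] ℝ) W := by
  have hlayer₁ (k : κ) : HasFDerivAt (fun V : (κ → ι → ℝ) × (μ → κ → ℝ) × (μ → ℝ) =>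
      sqRelu (∑ l, V.1 k l * x l)) (0 : _ →L[ℝ] ℝ) W :=
    DifferentiableAt.hasFDerivAt_sqRelu_comp_of_nonpos (by fun_prop) (h k)
  have hlayer₂ (j : μ) : HasFDerivAt (fun V : (κ → ι → ℝ) × (μ → κ → ℝ) × (μ → ℝ) =>
      sqRelu (∑ k, V.2.1 j k * sqRelu (∑ l, V.1 k l * x l))) (0 : _ →L[ℝ] ℝ) W := by
    have hsum := hasFDerivAt_sum_mul_of_hasFDerivAt_zero (c := fun k V => V.2.1 j k)
      (fun k => by fun_prop) hlayer₁ fun k => sqRelu_of_nonpos (h k)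
    refine hsum.differentiableAt.hasFDerivAt_sqRelu_comp_of_nonpos ?_
    simp [sqRelu_of_nonpos (h _)]
  exact hasFDerivAt_sum_mul_of_hasFDerivAt_zero (fun j => by fun_prop) hlayer₂
    fun j => by simp [sqRelu_of_nonpos (h _), sqRelu_of_nonpos le_rfl]

end Network

/-- For the three-layer squared-ReLU network with training points `x₁ = 𝟙/d, y₁ = 1`
and `x₂ = -𝟙/d, y₂ = 1`, the point `(W̄₁, W̄₂, W̄₃)` (single active neuron per layer,
all-ones first row) has residuals `0` at `x₁` and `1` at `x₂`, and is a stationary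
point of the loss. -/
theorem squared_relu_saddle (d : ℕ) [NeZero d]
    (σ : ℝ → ℝ) (hσ : ∀ x : ℝ, σ x = (max 0 x) ^ 2)
    (Hf : (Fin d → Fin d → ℝ) → (Fin d → Fin d → ℝ) → (Fin d → ℝ) →
      (Fin d → ℝ) → ℝ)
    (hHf : ∀ W1 W2 W3 x, Hf W1 W2 W3 x
      = ∑ j, W3 j * σ (∑ k, W2 j k * σ (∑ l, W1 k l * x l)))
    (x₁ x₂ : Fin d → ℝ)
    (hx₁ : x₁ = fun _ => 1 / (d : ℝ))
    (hx₂ : x₂ = fun _ => -(1 / (d : ℝ)))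
    (Lf : (Fin d → Fin d → ℝ) × (Fin d → Fin d → ℝ) × (Fin d → ℝ) → ℝ)
    (hLf : ∀ W, Lf W = (1/2) * (Hf W.1 W.2.1 W.2.2 x₁ - 1) ^ 2
      + (1/2) * (Hf W.1 W.2.1 W.2.2 x₂ - 1) ^ 2)
    (W1b W2b : Fin d → Fin d → ℝ) (W3b : Fin d → ℝ)
    (hW1 : W1b = fun i _ => if i = 0 then (1:ℝ) else 0)
    (hW2 : W2b = fun i j => if i = 0 ∧ j = 0 then (1:ℝ) else 0)
    (hW3 : W3b = fun j => if j = 0 then (1:ℝ) else 0) :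
    1 - Hf W1b W2b W3b x₁ = 0 ∧
    1 - Hf W1b W2b W3b x₂ = 1 ∧
    fderiv ℝ Lf (W1b, W2b, W3b) = 0 := by
  obtain rfl : σ = sqRelu := funext hσ
  have hH (W1 W2 W3 x) : Hf W1 W2 W3 x = sqReluNet (W1, W2, W3) x := hHf W1 W2 W3 x
  have hd : (d : ℝ) ≠ 0 := NeZero.ne _
  have hpre (c : ℝ) (k : Fin d) : ∑ l, W1b k l * c = if k = 0 then d * c else 0 := by
    split_ifs with hk <;> simp [hW1, hk]
  have h₁ : sqReluNet (W1b, W2b, W3b) x₁ = 1 := by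
    simp [sqReluNet, hx₁, hpre, hd, hW2, hW3, sqRelu_one]
  have h₂ (k : Fin d) : ∑ l, W1b k l * x₂ l ≤ 0 := by
    rw [hx₂, hpre]; split_ifs <;> simp [hd]
  have hL : HasFDerivAt Lf (0 : _ →L[ℝ] ℝ) (W1b, W2b, W3b) := by
    have hLnet :
        Lf = fun W => 1 / 2 * (sqReluNet W x₁ - 1) ^ 2 + 1 / 2 * (sqReluNet W x₂ - 1) ^ 2 :=
      funext fun W => by rw [hLf, hH, hH]
    rw [hLnet]
    simpa [h₁] using ((differentiable_sqReluNet x₁ _).hasFDerivAt.half_sq_sub 1).fun_add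
      ((hasFDerivAt_sqReluNet_zero_of_nonpos (W := (W1b, W2b, W3b)) h₂).half_sq_sub 1)
  exact ⟨by rw [hH, h₁]; ring, by rw [hH, sqReluNet_eq_zero_of_nonpos h₂]; ring, hL.fderiv⟩
end
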